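/- Let e be a negative edge added at step i in a simplex-wise graph filtration, followed by a positive edge e' = (u,v) added at step i+1. Then e lies on a cycle in G_{i+2} if and only if the bottleneck weight of the path connecting u and v in the minimum spanning forest of the final graph (with edges weighted by addition index) equals i. -/

import Mathlib

open SimpleGraph Finset

structure FGraph (V : Type) where
  verts : Finset V
  edges : Finset (Sym2 V)

inductive Step (V : Type) where
  | vertex (v : V)
  | edge (e : Sym2 V)
deriving DecidableEq

variable {V : Type} [DecidableEq V] {m : ℕ}

def FGraph.sg (G : FGraph V) : SimpleGraph V :=
  SimpleGraph.fromEdgeSet (G.edges : Set (Sym2 V))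

/-- `x` and `y` lie in the same connected component of `G`. -/
def FGraph.ConnectedIn (G : FGraph V) (x y : V) : Prop :=
  x ∈ G.verts ∧ y ∈ G.verts ∧ G.sg.Reachable x y

/-- The number of connected components of `G`. -/
noncomputable def FGraph.numComponents (G : FGraph V) : ℕ :=
  Nat.card (Quot fun x y : {v // v ∈ G.verts} => G.sg.Adj x.1 y.1)

/-- First Betti number as an integer: `|E| + #components - |V|`. -/
noncomputable def FGraph.betti1 (G : FGraph V) : ℤ :=
  (G.edges.card : ℤ) + (G.numComponents : ℤ) - (G.verts.card : ℤ)

/-- The edge `e` lies on some cycle of `G`. -/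
def FGraph.OnCycle (G : FGraph V) (e : Sym2 V) : Prop :=
  ∃ (x : V) (c : G.sg.Walk x x), c.IsCycle ∧ e ∈ c.edges

def FGraph.addStep (G : FGraph V) : Step V → FGraph V
  | .vertex v => ⟨insert v G.verts, G.edges⟩
  | .edge e => ⟨G.verts, insert e G.edges⟩

def StepValid (G : FGraph V) : Step V → Prop
  | .vertex v => v ∉ G.verts
  | .edge e => e ∉ G.edges ∧ ¬ e.IsDiag ∧ ∀ v ∈ e, v ∈ G.verts

/-- A simplex-wise standard graph filtration of length `m`. -/
structure Filtration (V : Type) (m : ℕ) where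
  steps : Fin m → Step V

namespace Filtration

def graphAt (F : Filtration V m) : ℕ → FGraph V
  | 0 => ⟨∅, ∅⟩
  | i + 1 => if h : i < m then (F.graphAt i).addStep (F.steps ⟨i, h⟩) else F.graphAt i

def Valid (F : Filtration V m) : Prop :=
  ∀ i : Fin m, StepValid (F.graphAt (i : ℕ)) (F.steps i)

/-- The addition index of vertex `x`. -/
noncomputable def vidx (F : Filtration V m) (x : V) : ℕ :=
  sInf {n : ℕ | ∃ i : Fin m, (i : ℕ) = n ∧ F.steps i = Step.vertex x}

/-- The addition index of edge `e`. -/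
noncomputable def eidx (F : Filtration V m) (e : Sym2 V) : ℕ :=
  sInf {n : ℕ | ∃ i : Fin m, (i : ℕ) = n ∧ F.steps i = Step.edge e}

/-- Step `i` adds a negative edge: one merging two connected components. -/
def NegativeAt (F : Filtration V m) (i : Fin m) : Prop :=
  ∃ e, F.steps i = Step.edge e ∧
    (F.graphAt ((i : ℕ) + 1)).numComponents < (F.graphAt (i : ℕ)).numComponents

/-- Step `i` adds a positive edge: one not changing the number of components. -/
def PositiveAt (F : Filtration V m) (i : Fin m) : Prop :=
  ∃ e, F.steps i = Step.edge e ∧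
    (F.graphAt ((i : ℕ) + 1)).numComponents = (F.graphAt (i : ℕ)).numComponents

/-- `x` is the oldest vertex of its connected component in `G_i`. -/
def OldestIn (F : Filtration V m) (i : ℕ) (x : V) : Prop :=
  x ∈ (F.graphAt i).verts ∧
    ∀ y, (F.graphAt i).ConnectedIn x y → F.vidx x ≤ F.vidx y

/-- `x` is the vertex paired with the negative edge added at step `j`:
`x` is the younger of the two oldest vertices of the merged components. -/
def PairedAt (F : Filtration V m) (j : Fin m) (x : V) : Prop :=
  ∃ u v, F.steps j = Step.edge s(u, v) ∧
    ¬ (F.graphAt (j : ℕ)).ConnectedIn u v ∧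
    (F.graphAt (j : ℕ)).ConnectedIn x u ∧ F.OldestIn (j : ℕ) x ∧
    ∃ y, (F.graphAt (j : ℕ)).ConnectedIn y v ∧ F.OldestIn (j : ℕ) y ∧
      F.vidx y < F.vidx x

/-- `x` is unpaired at stage `i`: not paired with any negative edge added before `i`. -/
def UnpairedAt (F : Filtration V m) (i : ℕ) (x : V) : Prop :=
  ∀ j : Fin m, (j : ℕ) < i → ¬ F.PairedAt j x

/-- Step `i` contributes a node of the merge forest (a vertex leaf or a
negative edge internal node). -/
def IsNode (F : Filtration V m) (i : Fin m) : Prop :=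
  (∃ v, F.steps i = Step.vertex v) ∨ F.NegativeAt i

/-- `x` is a representative vertex of the merge-forest node at level `i`. -/
def RepOf (F : Filtration V m) (i : Fin m) (x : V) : Prop :=
  F.steps i = Step.vertex x ∨
    ∃ u v, F.steps i = Step.edge s(u, v) ∧
      ¬ (F.graphAt (i : ℕ)).ConnectedIn u v ∧ (x = u ∨ x = v)

/-- The merge-forest node at level `j` is a child of the (negative-edge)
node at level `i`: `j`'s component at time `i` is one of the two components
merged by the edge at step `i`, and no node of level strictly between `j`
and `i` lies in that component. -/
def MFChild (F : Filtration V m) (j i : Fin m) : Prop :=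
  (j : ℕ) < (i : ℕ) ∧ F.IsNode j ∧
  ∃ u v, F.steps i = Step.edge s(u, v) ∧
    ¬ (F.graphAt (i : ℕ)).ConnectedIn u v ∧
    ∃ x, F.RepOf j x ∧
      ((F.graphAt (i : ℕ)).ConnectedIn x u ∨ (F.graphAt (i : ℕ)).ConnectedIn x v) ∧
      ∀ j' : Fin m, (j : ℕ) < (j' : ℕ) → (j' : ℕ) < (i : ℕ) → F.IsNode j' →
        ∀ y, F.RepOf j' y → ¬ (F.graphAt (i : ℕ)).ConnectedIn x y

end Filtration

/-! ### Auxiliary lemmas -/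

section AuxGraph

set_option linter.unusedSectionVars false

lemma reach_add {s : Set (Sym2 V)} {x y p q : V}
    (h : (fromEdgeSet (insert s(x, y) s)).Reachable p q) :
    (fromEdgeSet s).Reachable p q ∨
      ((fromEdgeSet s).Reachable p x ∧ (fromEdgeSet s).Reachable y q) ∨
      ((fromEdgeSet s).Reachable p y ∧ (fromEdgeSet s).Reachable x q) := by
  obtain ⟨w⟩ := h
  induction w with
  | nil => exact Or.inl (Reachable.refl _)
  | @cons pp cc qq h w ih =>
    rw [fromEdgeSet_adj, Set.mem_insert_iff] at h
    obtain ⟨(he | hs), hne⟩ := h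
    · rw [Sym2.eq_iff] at he
      rcases he with ⟨rfl, rfl⟩ | ⟨rfl, rfl⟩
      · rcases ih with h1 | ⟨h1, h2⟩ | ⟨h1, h2⟩
        · exact Or.inr (Or.inl ⟨Reachable.refl _, h1⟩)
        · exact Or.inr (Or.inl ⟨Reachable.refl _, h2⟩)
        · exact Or.inl h2
      · rcases ih with h1 | ⟨h1, h2⟩ | ⟨h1, h2⟩
        · exact Or.inr (Or.inr ⟨Reachable.refl _, h1⟩)
        · exact Or.inl h2
        · exact Or.inr (Or.inr ⟨Reachable.refl _, h2⟩)
    · have hpc : (fromEdgeSet s).Reachable pp cc :=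
        ((fromEdgeSet_adj _).mpr ⟨hs, hne⟩).reachable
      rcases ih with h1 | ⟨h1, h2⟩ | ⟨h1, h2⟩
      · exact Or.inl (hpc.trans h1)
      · exact Or.inr (Or.inl ⟨hpc.trans h1, h2⟩)
      · exact Or.inr (Or.inr ⟨hpc.trans h1, h2⟩)

lemma cross_lemma {H K : SimpleGraph V} {a u v : V} (w : H.Walk u v)
    (hu : K.Reachable a u) (hv : ¬K.Reachable a v) :
    ∃ x y, H.Adj x y ∧ K.Reachable a x ∧ ¬K.Reachable a y ∧ H.Reachable y v := by
  induction w with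
  | nil => exact absurd hu hv
  | @cons uu cc vv h w ih =>
    by_cases hc : K.Reachable a cc
    · exact ih hc hv
    · exact ⟨uu, cc, h, hu, hc, w.reachable⟩

lemma reachable_of_forall_adj {H₁ H₂ : SimpleGraph V} {p q : V}
    (h : H₁.Reachable p q) (hadj : ∀ x y, H₁.Adj x y → H₂.Reachable x y) :
    H₂.Reachable p q := by
  obtain ⟨w⟩ := h
  induction w with
  | nil => exact Reachable.refl _
  | @cons pp cc qq h w ih => exact (hadj _ _ h).trans ih

/-- splitting a path along one of its edges -/
lemma path_split {s : Set (Sym2 V)} {a b u v : V} (w : (fromEdgeSet s).Walk u v)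
    (hw : w.IsPath) (hab : s(a, b) ∈ w.edges) :
    ((fromEdgeSet (s \ {s(a, b)})).Reachable u a ∧ (fromEdgeSet (s \ {s(a, b)})).Reachable b v) ∨
      ((fromEdgeSet (s \ {s(a, b)})).Reachable u b ∧
        (fromEdgeSet (s \ {s(a, b)})).Reachable a v) := by
  induction w with
  | nil => simp at hab
  | @cons uu cc vv h w ih =>
    have hnodup := hw.edges_nodup
    rw [SimpleGraph.Walk.edges_cons, List.nodup_cons] at hnodup
    rw [SimpleGraph.Walk.edges_cons, List.mem_cons] at hab
    rcases hab with hab | hab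
    · have hnotin : s(a, b) ∉ w.edges := hab ▸ hnodup.1
      have hwalk : (fromEdgeSet (s \ {s(a, b)})).Reachable cc vv := by
        refine ⟨w.transfer _ ?_⟩
        intro e he
        have he' := w.edges_subset_edgeSet he
        rw [edgeSet_fromEdgeSet] at he' ⊢
        refine ⟨⟨he'.1, ?_⟩, he'.2⟩
        simp only [Set.mem_singleton_iff]
        rintro rfl
        exact hnotin he
      rw [Sym2.eq_iff] at hab
      rcases hab with ⟨rfl, rfl⟩ | ⟨rfl, rfl⟩
      · exact Or.inl ⟨Reachable.refl _, hwalk⟩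
      · exact Or.inr ⟨Reachable.refl _, hwalk⟩
    · have hne : s(uu, cc) ≠ s(a, b) := fun he => hnodup.1 (he ▸ hab)
      have huc : (fromEdgeSet (s \ {s(a, b)})).Reachable uu cc := by
        refine Adj.reachable ?_
        rw [fromEdgeSet_adj] at h ⊢
        exact ⟨⟨h.1, by simpa using hne⟩, h.2⟩
      rcases ih hw.of_cons hab with ⟨h1, h2⟩ | ⟨h1, h2⟩
      · exact Or.inl ⟨huc.trans h1, h2⟩
      · exact Or.inr ⟨huc.trans h1, h2⟩

lemma acyclic_add {s : Set (Sym2 V)} {x y : V}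
    (hs : (fromEdgeSet s).IsAcyclic) (hxy : ¬(fromEdgeSet s).Reachable x y) :
    (fromEdgeSet (insert s(x, y) s)).IsAcyclic := by
  intro v c hc
  by_cases he : s(x, y) ∈ c.edges
  · have := SimpleGraph.adj_and_reachable_delete_edges_iff_exists_cycle.mpr ⟨v, c, hc, he⟩
    refine hxy (Reachable.mono ?_ this.2)
    intro p q hpq
    simp only [SimpleGraph.deleteEdges, sdiff_adj, fromEdgeSet_adj, Set.mem_insert_iff, Set.mem_singleton_iff,
      not_and, not_ne_iff] at hpq
    obtain ⟨⟨hmem | hmem, hne⟩, hdel⟩ := hpq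
    · exact absurd (hdel hmem) hne
    · exact (fromEdgeSet_adj _).mpr ⟨hmem, hne⟩
  · refine hs (c.transfer (fromEdgeSet s) ?_) (hc.transfer _)
    intro e hee
    have he' := c.edges_subset_edgeSet hee
    rw [edgeSet_fromEdgeSet] at he' ⊢
    rcases he'.1 with h1 | h1
    · exact absurd (h1 ▸ hee) he
    · exact ⟨h1, he'.2⟩

end AuxGraph

section AuxComponents

set_option linter.unusedSectionVars false

/-- relation whose quotient counts components -/
abbrev FGraph.crel (G : FGraph V) : {v // v ∈ G.verts} → {v // v ∈ G.verts} → Prop :=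
  fun x y => G.sg.Adj x.1 y.1

lemma FGraph.walk_eqvGen (G : FGraph V) (hV : ∀ e ∈ G.edges, ∀ x ∈ e, x ∈ G.verts) :
    ∀ {x y : V} (_ : G.sg.Walk x y) (hx : x ∈ G.verts) (hy : y ∈ G.verts),
      Relation.EqvGen G.crel ⟨x, hx⟩ ⟨y, hy⟩ := by
  intro x y w
  induction w with
  | nil => intro hx hy; exact Relation.EqvGen.refl _
  | @cons xx cc yy h w ih =>
    intro hx hy
    have hmem : s(xx, cc) ∈ G.edges := by
      have := h
      rw [FGraph.sg, fromEdgeSet_adj] at this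
      exact_mod_cast this.1
    have hcc : cc ∈ G.verts := hV _ hmem cc (Sym2.mem_mk_right _ _)
    exact Relation.EqvGen.trans _ _ _ (Relation.EqvGen.rel _ _ h) (ih hcc hy)

lemma FGraph.eqvGen_reach (G : FGraph V) {x y : {v // v ∈ G.verts}}
    (h : Relation.EqvGen G.crel x y) : G.sg.Reachable x.1 y.1 := by
  induction h with
  | rel _ _ h => exact h.reachable
  | refl _ => exact Reachable.refl _
  | symm _ _ _ ih => exact ih.symm
  | trans _ _ _ _ _ ih1 ih2 => exact ih1.trans ih2

lemma sg_insert (G : FGraph V) (e : Sym2 V) :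
    (FGraph.mk G.verts (insert e G.edges)).sg
      = fromEdgeSet (insert e (G.edges : Set (Sym2 V))) := by
  rw [FGraph.sg]
  norm_cast

lemma numComponents_insert_eq (G : FGraph V) (hV : ∀ e ∈ G.edges, ∀ x ∈ e, x ∈ G.verts)
    {a b : V} (ha : a ∈ G.verts) (hb : b ∈ G.verts) (hr : G.sg.Reachable a b) :
    (FGraph.mk G.verts (insert s(a, b) G.edges)).numComponents = G.numComponents := by
  set G' : FGraph V := FGraph.mk G.verts (insert s(a, b) G.edges) with hG'
  have hRR' : ∀ x y : {v // v ∈ G.verts}, G.crel x y → G'.crel x y := by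
    intro x y h
    rw [FGraph.crel, sg_insert, fromEdgeSet_adj]
    rw [FGraph.crel, FGraph.sg, fromEdgeSet_adj] at h
    exact ⟨Set.mem_insert_of_mem _ h.1, h.2⟩
  have hback : ∀ x y : {v // v ∈ G.verts}, G'.crel x y → Relation.EqvGen G.crel x y := by
    intro x y h
    rw [FGraph.crel, sg_insert, fromEdgeSet_adj, Set.mem_insert_iff] at h
    obtain ⟨he | hs, hne⟩ := h
    · rw [Sym2.eq_iff] at he
      obtain ⟨w⟩ := hr
      rcases he with ⟨h1, h2⟩ | ⟨h1, h2⟩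
      · have hx : x = ⟨a, ha⟩ := Subtype.ext h1
        have hy : y = ⟨b, hb⟩ := Subtype.ext h2
        rw [hx, hy]
        exact G.walk_eqvGen hV w ha hb
      · have hx : x = ⟨b, hb⟩ := Subtype.ext h1
        have hy : y = ⟨a, ha⟩ := Subtype.ext h2
        rw [hx, hy]
        exact G.walk_eqvGen hV w.reverse hb ha
    · exact Relation.EqvGen.rel _ _ ((fromEdgeSet_adj _).mpr ⟨hs, hne⟩)
  let φ : Quot G.crel → Quot G'.crel :=
    Quot.lift (fun x => Quot.mk G'.crel x) (fun x y h => Quot.sound (hRR' x y h))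
  let ψ : Quot G'.crel → Quot G.crel :=
    Quot.lift (fun x => Quot.mk G.crel x) (fun x y h => Quot.eqvGen_sound (hback x y h))
  have hsurj1 : Function.Surjective φ := by
    apply Quot.ind; intro x; exact ⟨Quot.mk _ x, rfl⟩
  have hsurj2 : Function.Surjective ψ := by
    apply Quot.ind; intro x; exact ⟨Quot.mk _ x, rfl⟩
  exact le_antisymm (Nat.card_le_card_of_surjective φ hsurj1)
    (Nat.card_le_card_of_surjective ψ hsurj2)

lemma numComponents_insert_lt (G : FGraph V) (hV : ∀ e ∈ G.edges, ∀ x ∈ e, x ∈ G.verts)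
    {a b : V} (ha : a ∈ G.verts) (hb : b ∈ G.verts) (hab : a ≠ b)
    (hr : ¬G.sg.Reachable a b) :
    (FGraph.mk G.verts (insert s(a, b) G.edges)).numComponents < G.numComponents := by
  set G' : FGraph V := FGraph.mk G.verts (insert s(a, b) G.edges) with hG'
  have hRR' : ∀ x y : {v // v ∈ G.verts}, G.crel x y → G'.crel x y := by
    intro x y h
    rw [FGraph.crel, sg_insert, fromEdgeSet_adj]
    rw [FGraph.crel, FGraph.sg, fromEdgeSet_adj] at h
    exact ⟨Set.mem_insert_of_mem _ h.1, h.2⟩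
  let φ : Quot G.crel → Quot G'.crel :=
    Quot.lift (fun x => Quot.mk G'.crel x) (fun x y h => Quot.sound (hRR' x y h))
  have hsurj : Function.Surjective φ := by
    apply Quot.ind; intro x; exact ⟨Quot.mk _ x, rfl⟩
  have hne : Quot.mk G.crel ⟨a, ha⟩ ≠ Quot.mk G.crel ⟨b, hb⟩ := by
    intro h
    exact hr (G.eqvGen_reach (Quot.eqvGen_exact h))
  have heq : φ (Quot.mk G.crel ⟨a, ha⟩) = φ (Quot.mk G.crel ⟨b, hb⟩) := by
    show Quot.mk G'.crel ⟨a, ha⟩ = Quot.mk G'.crel ⟨b, hb⟩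
    refine Quot.sound ?_
    rw [FGraph.crel, sg_insert, fromEdgeSet_adj]
    exact ⟨Set.mem_insert _ _, hab⟩
  have hle : (G'.numComponents) ≤ G.numComponents :=
    Nat.card_le_card_of_surjective φ hsurj
  refine lt_of_le_of_ne hle ?_
  intro hcard
  have hbij : Function.Bijective φ :=
    (Nat.bijective_iff_surjective_and_card φ).mpr ⟨hsurj, hcard.symm⟩
  exact hne (hbij.injective heq)

end AuxComponents

namespace Filtration

set_option linter.unusedSectionVars false

lemma graphAt_succ (F : Filtration V m) {i : ℕ} (h : i < m) :
    F.graphAt (i + 1) = (F.graphAt i).addStep (F.steps ⟨i, h⟩) := by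
  simp [Filtration.graphAt, h]

lemma graphAt_succ_of_ge (F : Filtration V m) {i : ℕ} (h : ¬ i < m) :
    F.graphAt (i + 1) = F.graphAt i := by
  simp [Filtration.graphAt, h]

lemma edges_subset_succ (F : Filtration V m) (i : ℕ) :
    (F.graphAt i).edges ⊆ (F.graphAt (i + 1)).edges := by
  by_cases h : i < m
  · rw [F.graphAt_succ h]
    cases F.steps ⟨i, h⟩ with
    | vertex v => exact fun e he => he
    | edge e0 => exact fun e he => Finset.mem_insert_of_mem he
  · rw [F.graphAt_succ_of_ge h]

lemma edges_mono (F : Filtration V m) {n n' : ℕ} (h : n ≤ n') :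
    (F.graphAt n).edges ⊆ (F.graphAt n').edges := by
  induction h with
  | refl => exact fun e he => he
  | step h ih => exact fun e he => F.edges_subset_succ _ (ih he)

lemma verts_subset_succ (F : Filtration V m) (i : ℕ) :
    (F.graphAt i).verts ⊆ (F.graphAt (i + 1)).verts := by
  by_cases h : i < m
  · rw [F.graphAt_succ h]
    cases F.steps ⟨i, h⟩ with
    | vertex v => exact fun x hx => Finset.mem_insert_of_mem hx
    | edge e0 => exact fun x hx => hx
  · rw [F.graphAt_succ_of_ge h]

lemma verts_mono (F : Filtration V m) {n n' : ℕ} (h : n ≤ n') :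
    (F.graphAt n).verts ⊆ (F.graphAt n').verts := by
  induction h with
  | refl => exact fun x hx => hx
  | step h ih => exact fun x hx => F.verts_subset_succ _ (ih hx)

lemma verts_of_edges (F : Filtration V m) (hF : F.Valid) (n : ℕ) :
    ∀ e ∈ (F.graphAt n).edges, ∀ x ∈ e, x ∈ (F.graphAt n).verts := by
  induction n with
  | zero => intro e he; simp [Filtration.graphAt] at he
  | succ k ih =>
    by_cases h : k < m
    · have hv := hF ⟨k, h⟩
      rw [F.graphAt_succ h]
      rcases hs : F.steps ⟨k, h⟩ with v | e0 <;> rw [hs] at hv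
      · intro e he x hx
        exact Finset.mem_insert_of_mem (ih e he x hx)
      · intro e he x hx
        rcases Finset.mem_insert.mp he with rfl | he'
        · exact hv.2.2 x hx
        · exact ih e he' x hx
    · rw [F.graphAt_succ_of_ge h]; exact ih

lemma exists_step_of_mem (F : Filtration V m) {e : Sym2 V} {n : ℕ}
    (h : e ∈ (F.graphAt n).edges) :
    ∃ i : Fin m, (i : ℕ) < n ∧ F.steps i = Step.edge e := by
  induction n with
  | zero => simp [Filtration.graphAt] at h
  | succ k ih =>
    by_cases hk : k < m
    · rw [F.graphAt_succ hk] at h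
      rcases hs : F.steps ⟨k, hk⟩ with v | e0 <;> rw [hs] at h
      · obtain ⟨i, hi1, hi2⟩ := ih h
        exact ⟨i, Nat.lt_succ_of_lt hi1, hi2⟩
      · rcases Finset.mem_insert.mp h with rfl | h'
        · exact ⟨⟨k, hk⟩, Nat.lt_succ_self _, hs⟩
        · obtain ⟨i, hi1, hi2⟩ := ih h'
          exact ⟨i, Nat.lt_succ_of_lt hi1, hi2⟩
    · rw [F.graphAt_succ_of_ge hk] at h
      obtain ⟨i, hi1, hi2⟩ := ih h
      exact ⟨i, Nat.lt_succ_of_lt hi1, hi2⟩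

lemma eidx_lt_of_mem (F : Filtration V m) {e : Sym2 V} {n : ℕ}
    (h : e ∈ (F.graphAt n).edges) : F.eidx e < n := by
  obtain ⟨i, hi1, hi2⟩ := F.exists_step_of_mem h
  have : F.eidx e ≤ (i : ℕ) := Nat.sInf_le ⟨i, rfl, hi2⟩
  omega

lemma mem_of_steps (F : Filtration V m) (i : Fin m) {e : Sym2 V}
    (h : F.steps i = Step.edge e) : e ∈ (F.graphAt ((i : ℕ) + 1)).edges := by
  rw [F.graphAt_succ i.2]
  have : F.steps ⟨(i : ℕ), i.2⟩ = Step.edge e := by rwa [Fin.eta]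
  rw [this]
  exact Finset.mem_insert_self _ _

lemma mem_of_eidx_lt (F : Filtration V m) {e : Sym2 V} {n n₀ : ℕ}
    (h : e ∈ (F.graphAt n₀).edges) (hlt : F.eidx e < n) :
    e ∈ (F.graphAt n).edges := by
  obtain ⟨i, _, hi2⟩ := F.exists_step_of_mem h
  have hne : {k : ℕ | ∃ i : Fin m, (i : ℕ) = k ∧ F.steps i = Step.edge e}.Nonempty :=
    ⟨(i : ℕ), i, rfl, hi2⟩
  obtain ⟨j, hj1, hj2⟩ := Nat.sInf_mem hne
  have hmem := F.mem_of_steps j hj2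
  have : (j : ℕ) + 1 ≤ n := by
    rw [Filtration.eidx] at hlt; omega
  exact F.edges_mono this hmem

end Filtration

section Exchange

set_option linter.unusedSectionVars false

lemma core_exchange (F : Filtration V m) (T : Finset (Sym2 V))
    (hTsub : T ⊆ (F.graphAt m).edges)
    (hacyc : (SimpleGraph.fromEdgeSet (T : Set (Sym2 V))).IsAcyclic)
    (hspan : ∀ x y : V,
      (SimpleGraph.fromEdgeSet (T : Set (Sym2 V))).Reachable x y ↔
        (F.graphAt m).sg.Reachable x y)
    (hmin : ∀ T' : Finset (Sym2 V), T' ⊆ (F.graphAt m).edges →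
      (SimpleGraph.fromEdgeSet (T' : Set (Sym2 V))).IsAcyclic →
      (∀ x y : V,
        (SimpleGraph.fromEdgeSet (T' : Set (Sym2 V))).Reachable x y ↔
          (F.graphAt m).sg.Reachable x y) →
      ∑ e ∈ T, F.eidx e ≤ ∑ e ∈ T', F.eidx e)
    {n : ℕ} (hnm : n ≤ m) {a b u v : V} (hab : a ≠ b)
    (hfT : s(a, b) ∈ T) (hfn : n ≤ F.eidx s(a, b))
    (hua : (fromEdgeSet ((T.erase s(a, b) : Finset (Sym2 V)) : Set (Sym2 V))).Reachable u a)
    (hbv : (fromEdgeSet ((T.erase s(a, b) : Finset (Sym2 V)) : Set (Sym2 V))).Reachable b v)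
    (hr : (F.graphAt n).sg.Reachable u v) : False := by
  set K : SimpleGraph V :=
    fromEdgeSet ((T.erase s(a, b) : Finset (Sym2 V)) : Set (Sym2 V)) with hKdef
  have hKT : K ≤ fromEdgeSet (T : Set (Sym2 V)) :=
    fromEdgeSet_mono (by exact_mod_cast Finset.erase_subset _ _)
  -- the edge s(a,b) is a bridge of T
  have hadjT : (fromEdgeSet (T : Set (Sym2 V))).Adj a b :=
    (fromEdgeSet_adj _).mpr ⟨by exact_mod_cast hfT, hab⟩
  have hKab : ¬K.Reachable a b := by
    have hb := isAcyclic_iff_forall_adj_isBridge.mp hacyc hadjT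
    rw [isBridge_iff] at hb
    intro hcon
    apply hb
    rw [SimpleGraph.deleteEdges, ← fromEdgeSet_sdiff, ← Finset.coe_erase]
    exact hcon
  have hau : K.Reachable a u := hua.symm
  have hav : ¬K.Reachable a v := fun h => hKab (h.trans hbv.symm)
  obtain ⟨w⟩ := hr
  obtain ⟨x, y, hxy, hax, hay, hyv⟩ := cross_lemma w hau hav
  have hxyne : x ≠ y := hxy.ne
  have hgE : s(x, y) ∈ (F.graphAt n).edges := by
    have := hxy
    rw [FGraph.sg, fromEdgeSet_adj] at this
    exact_mod_cast this.1
  have heg : F.eidx s(x, y) < n := F.eidx_lt_of_mem hgE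
  have hgf : s(x, y) ≠ s(a, b) := by
    intro h
    rw [h] at heg
    omega
  have hgT : s(x, y) ∉ T.erase s(a, b) := by
    intro h
    refine hay (hax.trans (Adj.reachable ?_))
    exact (fromEdgeSet_adj _).mpr ⟨by exact_mod_cast h, hxyne⟩
  have hsgmono : (F.graphAt n).sg ≤ (F.graphAt m).sg :=
    fromEdgeSet_mono (by exact_mod_cast F.edges_mono hnm)
  -- y is connected to b in K
  have hyb : K.Reachable y b := by
    have hyT : (fromEdgeSet (T : Set (Sym2 V))).Reachable y b :=
      ((hspan y v).mpr (Reachable.mono hsgmono hyv)).trans (Reachable.mono hKT hbv.symm)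
    obtain ⟨w'⟩ := hyT
    have hq := w'.toPath.2
    set q := w'.toPath.1 with hqdef
    have hfq : s(a, b) ∉ q.edges := by
      intro hmemq
      rcases path_split q hq hmemq with ⟨h1, _⟩ | ⟨_, h2⟩
      · rw [← Finset.coe_erase] at h1
        exact hay h1.symm
      · rw [← Finset.coe_erase] at h2
        exact hKab h2
    refine ⟨q.transfer K ?_⟩
    intro e he
    have he' := q.edges_subset_edgeSet he
    rw [edgeSet_fromEdgeSet] at he'
    rw [hKdef, edgeSet_fromEdgeSet]
    refine ⟨?_, he'.2⟩
    rw [Finset.coe_erase]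
    refine ⟨he'.1, ?_⟩
    simp only [Set.mem_singleton_iff]
    rintro rfl
    exact hfq he
  -- the exchanged forest
  set T' : Finset (Sym2 V) := insert s(x, y) (T.erase s(a, b)) with hT'def
  have hcoe : (T' : Set (Sym2 V)) = insert s(x, y) ((T.erase s(a, b) : Finset (Sym2 V)) : Set (Sym2 V)) := by
    rw [hT'def]; exact Finset.coe_insert _ _
  have hT'sub : T' ⊆ (F.graphAt m).edges := by
    intro e he
    rcases Finset.mem_insert.mp he with rfl | he'
    · exact F.edges_mono hnm hgE
    · exact hTsub (Finset.erase_subset _ _ he')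
  have hKxy : ¬K.Reachable x y := fun h => hay (hax.trans h)
  have hKacyc : K.IsAcyclic := by
    intro z c hc
    refine hacyc (c.transfer (fromEdgeSet (T : Set (Sym2 V))) ?_) (hc.transfer _)
    intro e he
    have he' := c.edges_subset_edgeSet he
    rw [hKdef, edgeSet_fromEdgeSet] at he'
    rw [edgeSet_fromEdgeSet]
    refine ⟨?_, he'.2⟩
    have := he'.1
    rw [Finset.coe_erase] at this
    exact this.1
  have hT'acyc : (fromEdgeSet (T' : Set (Sym2 V))).IsAcyclic := by
    rw [hcoe]
    exact acyclic_add hKacyc hKxy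
  have hKT' : K ≤ fromEdgeSet (T' : Set (Sym2 V)) := by
    rw [hcoe]
    exact fromEdgeSet_mono (Set.subset_insert _ _)
  have hadjT' : (fromEdgeSet (T' : Set (Sym2 V))).Adj x y := by
    rw [hcoe]
    exact (fromEdgeSet_adj _).mpr ⟨Set.mem_insert _ _, hxyne⟩
  have hT'span : ∀ z w : V,
      (fromEdgeSet (T' : Set (Sym2 V))).Reachable z w ↔ (F.graphAt m).sg.Reachable z w := by
    intro z w
    constructor
    · intro h
      refine Reachable.mono ?_ h
      rw [FGraph.sg]
      exact fromEdgeSet_mono (by exact_mod_cast hT'sub)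
    · intro h
      refine reachable_of_forall_adj ((hspan z w).mpr h) ?_
      intro x' y' hadj
      rw [fromEdgeSet_adj] at hadj
      by_cases hcase : s(x', y') = s(a, b)
      · have hreach_ab : (fromEdgeSet (T' : Set (Sym2 V))).Reachable a b :=
          (Reachable.mono hKT' hax).trans (hadjT'.reachable.trans (Reachable.mono hKT' hyb))
        rw [Sym2.eq_iff] at hcase
        rcases hcase with ⟨rfl, rfl⟩ | ⟨rfl, rfl⟩
        · exact hreach_ab
        · exact hreach_ab.symm
      · refine Adj.reachable ?_
        rw [fromEdgeSet_adj, hcoe]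
        refine ⟨Set.mem_insert_of_mem _ ?_, hadj.2⟩
        rw [Finset.coe_erase]
        exact ⟨hadj.1, by simpa using hcase⟩
  have hsum1 : ∑ e ∈ T', F.eidx e = F.eidx s(x, y) + ∑ e ∈ T.erase s(a, b), F.eidx e :=
    Finset.sum_insert hgT
  have hsum2 : F.eidx s(a, b) + ∑ e ∈ T.erase s(a, b), F.eidx e = ∑ e ∈ T, F.eidx e :=
    Finset.add_sum_erase _ _ hfT
  have := hmin T' hT'sub hT'acyc hT'span
  omega

end Exchange

section Key

set_option linter.unusedSectionVars false

lemma key_lemma (F : Filtration V m) (T : Finset (Sym2 V))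
    (hTsub : T ⊆ (F.graphAt m).edges)
    (hacyc : (SimpleGraph.fromEdgeSet (T : Set (Sym2 V))).IsAcyclic)
    (hspan : ∀ x y : V,
      (SimpleGraph.fromEdgeSet (T : Set (Sym2 V))).Reachable x y ↔
        (F.graphAt m).sg.Reachable x y)
    (hmin : ∀ T' : Finset (Sym2 V), T' ⊆ (F.graphAt m).edges →
      (SimpleGraph.fromEdgeSet (T' : Set (Sym2 V))).IsAcyclic →
      (∀ x y : V,
        (SimpleGraph.fromEdgeSet (T' : Set (Sym2 V))).Reachable x y ↔
          (F.graphAt m).sg.Reachable x y) →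
      ∑ e ∈ T, F.eidx e ≤ ∑ e ∈ T', F.eidx e)
    {n : ℕ} (hnm : n ≤ m) {u v : V}
    (p : (SimpleGraph.fromEdgeSet (T : Set (Sym2 V))).Walk u v) (hp : p.IsPath)
    (hr : (F.graphAt n).sg.Reachable u v) :
    ∀ f ∈ p.edges, F.eidx f < n := by
  intro f hf
  by_contra hcon
  push_neg at hcon
  have hfe := p.edges_subset_edgeSet hf
  rw [edgeSet_fromEdgeSet] at hfe
  obtain ⟨hfT, hfd⟩ := hfe
  revert hf hcon hfT hfd
  induction f using Sym2.ind with
  | _ a b =>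
    intro hf hcon hfT hfd
    have hab : a ≠ b := by simpa using hfd
    have hfT' : s(a, b) ∈ T := by exact_mod_cast hfT
    rcases path_split p hp hf with ⟨h1, h2⟩ | ⟨h1, h2⟩
    · rw [← Finset.coe_erase] at h1 h2
      exact core_exchange F T hTsub hacyc hspan hmin hnm hab hfT' hcon h1 h2 hr
    · rw [← Finset.coe_erase] at h1 h2
      rw [Sym2.eq_swap] at hfT' hcon h1 h2
      exact core_exchange F T hTsub hacyc hspan hmin hnm hab.symm hfT' hcon h1 h2 hr

end Key

set_option maxHeartbeats 1000000 in
/-- with a negative edge `e1` at step `i1` followed by a positive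
edge `e2 = (u,v)` at step `i2 = i1 + 1`, the edge `e1` lies on a cycle in
`G_{i2+1}` iff the bottleneck weight `W` of the `u`–`v` path in the minimum
spanning forest of the final graph (edges weighted by addition index)
equals `i1`. -/
theorem stmt_3 {V : Type} [DecidableEq V] {m : ℕ} (F : Filtration V m)
    (hF : F.Valid) (i1 i2 : Fin m) (h12 : (i2 : ℕ) = (i1 : ℕ) + 1)
    (e1 : Sym2 V) (he1 : F.steps i1 = Step.edge e1) (hneg : F.NegativeAt i1)
    (u v : V) (he2 : F.steps i2 = Step.edge s(u, v)) (hpos : F.PositiveAt i2)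
    (T : Finset (Sym2 V)) (hTsub : T ⊆ (F.graphAt m).edges)
    (hacyc : (SimpleGraph.fromEdgeSet (T : Set (Sym2 V))).IsAcyclic)
    (hspan : ∀ x y : V,
      (SimpleGraph.fromEdgeSet (T : Set (Sym2 V))).Reachable x y ↔
        (F.graphAt m).sg.Reachable x y)
    (hmin : ∀ T' : Finset (Sym2 V), T' ⊆ (F.graphAt m).edges →
      (SimpleGraph.fromEdgeSet (T' : Set (Sym2 V))).IsAcyclic →
      (∀ x y : V,
        (SimpleGraph.fromEdgeSet (T' : Set (Sym2 V))).Reachable x y ↔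
          (F.graphAt m).sg.Reachable x y) →
      ∑ e ∈ T, F.eidx e ≤ ∑ e ∈ T', F.eidx e)
    (p : (SimpleGraph.fromEdgeSet (T : Set (Sym2 V))).Walk u v) (hp : p.IsPath)
    (W : ℕ) (hWmem : W ∈ p.edges.map F.eidx)
    (hWmax : ∀ e ∈ p.edges, F.eidx e ≤ W) :
    (F.graphAt ((i2 : ℕ) + 1)).OnCycle e1 ↔ W = (i1 : ℕ) := by
  revert he1
  induction e1 using Sym2.ind with
  | _ a b =>
  intro he1
  -- basic facts from validity
  have hv1 := hF i1
  rw [he1] at hv1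
  obtain ⟨hnotin1, hdiag1, hin1⟩ := hv1
  have hab : a ≠ b := by simpa using hdiag1
  have haV : a ∈ (F.graphAt (i1 : ℕ)).verts := hin1 a (Sym2.mem_mk_left _ _)
  have hbV : b ∈ (F.graphAt (i1 : ℕ)).verts := hin1 b (Sym2.mem_mk_right _ _)
  have hv2 := hF i2
  rw [he2] at hv2
  obtain ⟨hnotin2, hdiag2, hin2⟩ := hv2
  have huv : u ≠ v := by simpa using hdiag2
  have huV : u ∈ (F.graphAt (i2 : ℕ)).verts := hin2 u (Sym2.mem_mk_left _ _)
  have hvV : v ∈ (F.graphAt (i2 : ℕ)).verts := hin2 v (Sym2.mem_mk_right _ _)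
  -- descriptions of successive graphs
  have hG2 : F.graphAt ((i1 : ℕ) + 1)
      = FGraph.mk (F.graphAt (i1 : ℕ)).verts (insert s(a, b) (F.graphAt (i1 : ℕ)).edges) := by
    rw [F.graphAt_succ i1.2, Fin.eta, he1]
    rfl
  have hG3 : F.graphAt ((i2 : ℕ) + 1)
      = FGraph.mk (F.graphAt (i2 : ℕ)).verts (insert s(u, v) (F.graphAt (i2 : ℕ)).edges) := by
    rw [F.graphAt_succ i2.2, Fin.eta, he2]
    rfl
  have hVerts1 := F.verts_of_edges hF (i1 : ℕ)
  have hVerts2 := F.verts_of_edges hF (i2 : ℕ)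
  -- negativity: a and b are not connected at time i1
  have hnegr : ¬(F.graphAt (i1 : ℕ)).sg.Reachable a b := by
    obtain ⟨e, hesteps, hlt⟩ := hneg
    rw [he1] at hesteps
    have he' : e = s(a, b) := (Step.edge.inj hesteps).symm
    subst he'
    rw [hG2] at hlt
    intro hre
    rw [numComponents_insert_eq _ hVerts1 haV hbV hre] at hlt
    exact lt_irrefl _ hlt
  -- positivity: u and v are connected at time i2
  have huvr : (F.graphAt (i2 : ℕ)).sg.Reachable u v := by
    obtain ⟨e, hesteps, heqc⟩ := hpos
    rw [he2] at hesteps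
    have he' : e = s(u, v) := (Step.edge.inj hesteps).symm
    subst he'
    rw [hG3] at heqc
    by_contra hcon
    have := numComponents_insert_lt _ hVerts2 huV hvV huv hcon
    omega
  have he1mem : s(a, b) ∈ (F.graphAt (i2 : ℕ)).edges := by
    rw [h12, hG2]
    exact Finset.mem_insert_self _ _
  have hne12 : s(u, v) ≠ s(a, b) := fun h => hnotin2 (h ▸ he1mem)
  have hsg2 : (F.graphAt (i2 : ℕ)).sg
      = fromEdgeSet (insert s(a, b) ((F.graphAt (i1 : ℕ)).edges : Set (Sym2 V))) := by
    rw [h12, hG2]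
    exact sg_insert _ _
  have hsg3 : (F.graphAt ((i2 : ℕ) + 1)).sg
      = fromEdgeSet (insert s(u, v) ((F.graphAt (i2 : ℕ)).edges : Set (Sym2 V))) := by
    rw [hG3]
    exact sg_insert _ _
  -- the cycle criterion
  have honc : (F.graphAt ((i2 : ℕ) + 1)).OnCycle s(a, b) ↔
      ((F.graphAt ((i2 : ℕ) + 1)).sg.Adj a b ∧
        ((F.graphAt ((i2 : ℕ) + 1)).sg \ fromEdgeSet {s(a, b)}).Reachable a b) := by
    unfold FGraph.OnCycle
    exact Iff.symm adj_and_reachable_delete_edges_iff_exists_cycle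
  have hadj3 : (F.graphAt ((i2 : ℕ) + 1)).sg.Adj a b := by
    rw [hsg3, fromEdgeSet_adj]
    exact ⟨Set.mem_insert_of_mem _ (by exact_mod_cast he1mem), hab⟩
  have hE2 : ((F.graphAt (i2 : ℕ)).edges : Set (Sym2 V))
      = insert s(a, b) ((F.graphAt (i1 : ℕ)).edges : Set (Sym2 V)) := by
    rw [h12, hG2]
    exact Finset.coe_insert _ _
  have hsetdiff : (insert s(u, v) ((F.graphAt (i2 : ℕ)).edges : Set (Sym2 V))) \ {s(a, b)}
      = insert s(u, v) ((F.graphAt (i1 : ℕ)).edges : Set (Sym2 V)) := by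
    rw [hE2]
    ext e
    simp only [Set.mem_diff, Set.mem_insert_iff, Set.mem_singleton_iff]
    constructor
    · rintro ⟨h | h | h, hne⟩
      · exact Or.inl h
      · exact absurd h hne
      · exact Or.inr h
    · rintro (rfl | h)
      · exact ⟨Or.inl rfl, hne12⟩
      · refine ⟨Or.inr (Or.inr h), ?_⟩
        rintro rfl
        exact hnotin1 (by exact_mod_cast h)
  have hdel : (F.graphAt ((i2 : ℕ) + 1)).sg \ fromEdgeSet {s(a, b)}
      = fromEdgeSet (insert s(u, v) ((F.graphAt (i1 : ℕ)).edges : Set (Sym2 V))) := by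
    rw [hsg3, ← fromEdgeSet_sdiff, hsetdiff]
  -- abbreviation for the graph at time i1
  set H1 : SimpleGraph V := (F.graphAt (i1 : ℕ)).sg with hH1def
  have hH1 : H1 = fromEdgeSet (((F.graphAt (i1 : ℕ)).edges : Set (Sym2 V))) := rfl
  -- the key characterization of being on a cycle
  have hchar : (F.graphAt ((i2 : ℕ) + 1)).OnCycle s(a, b) ↔ ¬H1.Reachable u v := by
    rw [honc, hdel]
    constructor
    · rintro ⟨-, hreach⟩ huvH1
      rw [hH1] at huvH1
      rcases reach_add hreach with h | ⟨hpa, hqb⟩ | ⟨hpa, hqb⟩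
      · exact hnegr h
      · exact hnegr (hpa.trans (huvH1.trans hqb))
      · exact hnegr (hpa.trans (huvH1.symm.trans hqb))
    · intro hnr
      refine ⟨hadj3, ?_⟩
      rw [hsg2] at huvr
      have hH1L : fromEdgeSet (((F.graphAt (i1 : ℕ)).edges : Set (Sym2 V)))
          ≤ fromEdgeSet (insert s(u, v) ((F.graphAt (i1 : ℕ)).edges : Set (Sym2 V))) :=
        fromEdgeSet_mono (Set.subset_insert _ _)
      have hadjL : (fromEdgeSet (insert s(u, v)
          ((F.graphAt (i1 : ℕ)).edges : Set (Sym2 V)))).Adj u v :=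
        (fromEdgeSet_adj _).mpr ⟨Set.mem_insert _ _, huv⟩
      rcases reach_add huvr with h | ⟨h1, h2⟩ | ⟨h1, h2⟩
      · exact absurd h hnr
      · exact ((Reachable.mono hH1L h1.symm).trans hadjL.reachable).trans
          (Reachable.mono hH1L h2.symm)
      · exact ((Reachable.mono hH1L h2.symm).symm.trans hadjL.symm.reachable).trans
          (Reachable.mono hH1L h1)
  -- now the bottleneck-weight characterization
  rw [List.mem_map] at hWmem
  obtain ⟨f0, hf0p, hf0W⟩ := hWmem
  have h1m : (i1 : ℕ) ≤ m := le_of_lt i1.2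
  have h2m : (i1 : ℕ) + 1 ≤ m := by
    have := i2.2
    omega
  have huvr' : (F.graphAt ((i1 : ℕ) + 1)).sg.Reachable u v := h12 ▸ huvr
  have hWchar : W = (i1 : ℕ) ↔ ¬H1.Reachable u v := by
    constructor
    · intro hW hreach
      have := key_lemma F T hTsub hacyc hspan hmin h1m p hp hreach f0 hf0p
      omega
    · intro hnr
      have hWle := key_lemma F T hTsub hacyc hspan hmin h2m p hp huvr' f0 hf0p
      by_contra hWne
      have hWlt : W < (i1 : ℕ) := by omega
      refine hnr ?_
      rw [hH1]
      refine ⟨p.transfer _ ?_⟩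
      intro e he
      have he' := p.edges_subset_edgeSet he
      rw [edgeSet_fromEdgeSet] at he'
      rw [edgeSet_fromEdgeSet]
      refine ⟨?_, he'.2⟩
      have heT : e ∈ T := by exact_mod_cast he'.1
      have hemem : e ∈ (F.graphAt (i1 : ℕ)).edges := by
        refine F.mem_of_eidx_lt (hTsub heT) ?_
        have := hWmax e he
        omega
      exact_mod_cast hemem
  exact hchar.trans hWchar.symm
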